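/- In Game 1 on a set A ⊆ ω^ω, Player I has a winning strategy if and only if there exists a Hechler tree H with [H] ∩ A = ∅. -/

import Mathlib

/-!
Given a strategy `τ` for Player I, the sequences of moves of Player II that are legal against `τ`
form a Hechler tree: at each node only the finitely many values `≤` I's current move are excluded.
Its branches are exactly II's plays against `τ`, so they avoid `A` when `τ` is winning.
Conversely, against a Hechler tree `H`, Player I plays at the node `s` reached by II the largest
`n` with `s ⌢ n ∉ H`; every legal answer then keeps the play inside `H`, so it ends in `[H]`.
-/

/-- The restriction `x↾n` of `x : ℕ → ℕ` to its first `n` values, as a finite sequence. -/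
def res (x : ℕ → ℕ) (n : ℕ) : List ℕ := List.ofFn fun i : Fin n => x i

/-- A subtree of `ω^{<ω}`: a set of finite sequences closed under initial segments. -/
def IsSubtree (T : Set (List ℕ)) : Prop := ∀ s ∈ T, ∀ t : List ℕ, t <+: s → t ∈ T

/-- `[T]`, the set of branches of a subtree `T`. -/
def branches (T : Set (List ℕ)) : Set (ℕ → ℕ) := {x | ∀ n, res x n ∈ T}

/-- A Hechler tree: a (nonempty) subtree in which every node splits cofinitely often. -/
def IsHechler (T : Set (List ℕ)) : Prop :=
  IsSubtree T ∧ [] ∈ T ∧ ∀ s ∈ T, {n : ℕ | s ++ [n] ∉ T}.Finite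

/-- Game 1 on `A`: at round `k` Player I plays `n k` and Player II responds with `m k > n k`;
Player II wins iff `m ∈ A`.  A strategy for Player I maps a position, i.e. the list of
previous rounds `(n 0, m 0), …, (n (k-1), m (k-1))`, to Player I's move `n k`.  It is a
*winning* strategy iff every play in which Player I follows it and Player II plays legally
(`m k > n k` for all `k`) lands outside `A`. -/
def IWinsGame1 (A : Set (ℕ → ℕ)) : Prop :=
  ∃ τ : List (ℕ × ℕ) → ℕ,
    ∀ n m : ℕ → ℕ,
      (∀ k, n k = τ (List.ofFn fun i : Fin k => (n i, m i))) →
      (∀ k, m k > n k) → m ∉ A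

lemma res_succ (x : ℕ → ℕ) (k : ℕ) : res x (k + 1) = res x k ++ [x k] :=
  List.ofFn_succ_last

lemma map_snd_ofFn_eq_res (n m : ℕ → ℕ) (k : ℕ) :
    (List.ofFn fun i : Fin k => (n i, m i)).map Prod.snd = res m k := by
  simp only [List.map_ofFn]
  rfl

namespace Game1

/-- The position reached when Player I follows `τ` and Player II plays the moves `s`. -/
def history (τ : List (ℕ × ℕ) → ℕ) (s : List ℕ) : List (ℕ × ℕ) :=
  s.foldl (fun h m => h ++ [(τ h, m)]) []

lemma history_append_singleton (τ : List (ℕ × ℕ) → ℕ) (s : List ℕ) (a : ℕ) :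
    history τ (s ++ [a]) = history τ s ++ [(τ (history τ s), a)] := by
  simp [history, List.foldl_append]

lemma history_res (τ : List (ℕ × ℕ) → ℕ) (m : ℕ → ℕ) (k : ℕ) :
    history τ (res m k) = List.ofFn fun i : Fin k => (τ (history τ (res m i)), m i) := by
  induction k with
  | zero => rfl
  | succ k ih =>
    rw [res_succ, history_append_singleton, List.ofFn_succ_last]
    exact congrArg (· ++ _) ih

def legalTree (τ : List (ℕ × ℕ) → ℕ) : Set (List ℕ) :=
  {s | ∀ i (h : i < s.length), τ (history τ (s.take i)) < s[i]}

variable {τ : List (ℕ × ℕ) → ℕ}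

lemma append_mem_legalTree {t r : List ℕ} (h : t ++ r ∈ legalTree τ) : t ∈ legalTree τ := by
  intro i hi
  have := h i (by simp; omega)
  rwa [List.getElem_append_left hi, List.take_append_of_le_length hi.le] at this

lemma append_singleton_mem_legalTree_iff {s : List ℕ} {a : ℕ} :
    s ++ [a] ∈ legalTree τ ↔ s ∈ legalTree τ ∧ τ (history τ s) < a := by
  refine ⟨fun h => ⟨append_mem_legalTree h, ?_⟩, fun ⟨hs, ha⟩ i hi => ?_⟩
  · simpa using h s.length (by simp)
  · rw [List.length_append, List.length_singleton] at hi
    rcases (Nat.lt_succ_iff.mp hi).lt_or_eq with hi | rfl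
    · rw [List.getElem_append_left hi, List.take_append_of_le_length hi.le]
      exact hs i hi
    · simpa using ha

lemma isHechler_legalTree (τ : List (ℕ × ℕ) → ℕ) : IsHechler (legalTree τ) := by
  refine ⟨fun s hs t ⟨r, hr⟩ => append_mem_legalTree (hr ▸ hs), fun i h => by simp at h,
    fun s hs => (Set.finite_Iic (τ (history τ s))).subset fun a ha => ?_⟩
  by_contra hlt
  exact ha (append_singleton_mem_legalTree_iff.mpr ⟨hs, not_le.mp hlt⟩)

lemma res_mem_legalTree_iff {x : ℕ → ℕ} {n : ℕ} :
    res x n ∈ legalTree τ ↔ ∀ k < n, τ (history τ (res x k)) < x k := by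
  induction n with
  | zero => simp [res, legalTree]
  | succ n ih => rw [res_succ, append_singleton_mem_legalTree_iff, ih, Nat.forall_lt_succ_right]

lemma mem_branches_legalTree_iff {x : ℕ → ℕ} :
    x ∈ branches (legalTree τ) ↔ ∀ k, τ (history τ (res x k)) < x k := by
  simp only [branches, Set.mem_ofPred_eq, res_mem_legalTree_iff]
  exact ⟨fun h k => h (k + 1) k k.lt_succ_self, fun h n k _ => h k⟩

/-- For a Hechler tree the set is finite, so `sSup` is its maximum rather than a junk value. -/
noncomputable def strategyOfTree (H : Set (List ℕ)) (p : List (ℕ × ℕ)) : ℕ :=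
  sSup {n | p.map Prod.snd ++ [n] ∉ H}

lemma mem_branches_of_follows_strategyOfTree {H : Set (List ℕ)} (hH : IsHechler H)
    {n m : ℕ → ℕ} (hn : ∀ k, n k = strategyOfTree H (List.ofFn fun i : Fin k => (n i, m i)))
    (hm : ∀ k, m k > n k) : m ∈ branches H := by
  intro k
  induction k with
  | zero => exact hH.2.1
  | succ k ih =>
    have hnk : n k = sSup {a | res m k ++ [a] ∉ H} := by
      rw [hn k, strategyOfTree, map_snd_ofFn_eq_res]
    rw [res_succ]
    by_contra hout
    exact notMem_of_csSup_lt (hnk ▸ hm k) (hH.2.2 _ ih).bddAbove hout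

end Game1

open Game1 in
theorem game1_playerI_iff_hechler (A : Set (ℕ → ℕ)) :
    IWinsGame1 A ↔ ∃ H : Set (List ℕ), IsHechler H ∧ branches H ∩ A = ∅ := by
  constructor
  · rintro ⟨τ, hτ⟩
    refine ⟨legalTree τ, isHechler_legalTree τ, Set.eq_empty_of_forall_notMem ?_⟩
    rintro m ⟨hm, hA⟩
    exact hτ _ m (fun k => congrArg τ (history_res τ m k)) (mem_branches_legalTree_iff.mp hm) hA
  · rintro ⟨H, hH, hdisj⟩
    refine ⟨strategyOfTree H, fun n m hn hm hA => ?_⟩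
    exact (Set.eq_empty_iff_forall_notMem.mp hdisj) m
      ⟨mem_branches_of_follows_strategyOfTree hH hn hm, hA⟩
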